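/- Let H be a complex Hilbert space with grading γ (γ* = γ, γ²=1), F bounded self-adjoint with F²=1 and Fγ + γF = 0, and let a₀,…,a_n be bounded operators commuting with γ such that each [F, a_i] (i ≥ 1) is trace class, with n even and n ≥ 2. Define τ(a₀,…,a_n) = Tr(γ a₀ [F,a₁]⋯[F,a_n]). Then τ satisfies the cyclic symmetry τ(a_n, a₀, …, a_{n−1}) = (−1)^n τ(a₀, …, a_n) and bτ = 0. -/

import Mathlib

/- Mathlib has no theory of trace-class operators on infinite-dimensional Hilbert
spaces, so we work over a finite-dimensional complex Hilbert space, where every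
bounded operator is trace class (hence the trace-class hypothesis of the statement
holds automatically) and the trace is `LinearMap.trace`. -/

variable {H : Type*} [NormedAddCommGroup H] [InnerProductSpace ℂ H]
  [FiniteDimensional ℂ H]

noncomputable def opTrace (T : H →L[ℂ] H) : ℂ :=
  LinearMap.trace ℂ H (T : H →ₗ[ℂ] H)

/-- The character cochain of an even Fredholm module:
`τ(a₀, a₁, …, a_n) = Tr(γ a₀ [F,a₁] [F,a₂] ⋯ [F,a_n])`. -/
noncomputable def charCochainEven (γ F : H →L[ℂ] H) {n : ℕ}
    (a : Fin (n + 1) → (H →L[ℂ] H)) : ℂ :=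
  opTrace (γ * a 0 * (List.ofFn fun i : Fin n => F * a i.succ - a i.succ * F).prod)

/- Write `τ(a₀,…,aₙ) = Tr(γ a₀ δa₁ ⋯ δaₙ)` with the derivation `δ = ⁅F, ·⁆`.

`bτ = 0`: by the Leibniz rule the alternating sum of the products `δa₁ ⋯ δ(aᵢaᵢ₊₁) ⋯ δaₙ₊₁`
telescopes to `a₁ δa₂ ⋯ δaₙ₊₁ - (-1)ⁿ δa₁ ⋯ δaₙ aₙ₊₁`.  The first term cancels the face
`a₀a₁`, the second cancels the wrap-around face once `aₙ₊₁` is moved past `γ` and around the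
trace.

Cyclicity: `F² = 1` makes `F` anticommute with each `δx`, hence with a product `ω` of an odd
number of them, and together with `Fγ = -γF` this forces `Tr(γ δc ω) = 0`.  Take
`c = aₙa₀` and `ω = δa₁ ⋯ δaₙ₋₁`, expand `δ(aₙa₀)` by Leibniz, and move `δaₙ` past `γ` and
around the trace. -/

section DerivProd

variable {M : Type*} [Monoid M] (δ : M → M)

def derivProd {n : ℕ} (x : Fin n → M) : M :=
  (List.ofFn fun i => δ (x i)).prod

@[simp]
theorem derivProd_zero (x : Fin 0 → M) : derivProd δ x = 1 := rfl

theorem derivProd_succ {n : ℕ} (x : Fin (n + 1) → M) :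
    derivProd δ x = δ (x 0) * derivProd δ (Fin.tail x) := by
  simp [derivProd, List.ofFn_succ, Fin.tail]

theorem derivProd_succ' {n : ℕ} (x : Fin (n + 1) → M) :
    derivProd δ x = derivProd δ (Fin.init x) * δ (x (Fin.last n)) := by
  rw [derivProd, List.ofFn_succ', List.prod_concat]; rfl

end DerivProd

def hochschildFace {M : Type*} [Mul M] {n : ℕ} (a : Fin (n + 1) → M) (i : Fin n) :
    Fin n → M :=
  fun j => if (j : ℕ) < i then a j.castSucc else if j = i then a i.castSucc * a i.succ else a j.succ

section HochschildFace

variable {M : Type*} [Mul M] {n : ℕ} (a : Fin (n + 2) → M)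

@[simp]
theorem hochschildFace_zero_zero : hochschildFace a 0 0 = a 0 * a 1 := by
  simp [hochschildFace]

@[simp]
theorem tail_hochschildFace_zero : Fin.tail (hochschildFace a 0) = Fin.tail (Fin.tail a) := by
  ext j
  simp [hochschildFace, Fin.tail, Fin.succ_ne_zero]

@[simp]
theorem hochschildFace_succ_zero (i : Fin n) : hochschildFace a i.succ 0 = a 0 := by
  simp [hochschildFace]

@[simp]
theorem tail_hochschildFace_succ (i : Fin n) :
    Fin.tail (hochschildFace a i.succ) = hochschildFace (Fin.tail a) i := by
  ext j
  simp [hochschildFace, Fin.tail, Fin.succ_inj]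

end HochschildFace

theorem sum_neg_one_pow_smul_derivProd_hochschildFace {R : Type*} [Ring R] (δ : R → R)
    (hδ : ∀ x y, δ (x * y) = δ x * y + x * δ y) {m : ℕ} (y : Fin (m + 1) → R) :
    ∑ i : Fin m, (-1 : ℤ) ^ (i : ℕ) • derivProd δ (hochschildFace y i) =
      y 0 * derivProd δ (Fin.tail y) - (-1 : ℤ) ^ m • (derivProd δ (Fin.init y) * y (Fin.last m)) := by
  induction m with
  | zero => simp
  | succ m ih =>
    have hinit : derivProd δ (Fin.init y) = δ (y 0) * derivProd δ (Fin.init (Fin.tail y)) :=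
      derivProd_succ δ _
    rw [Fin.sum_univ_succ]
    simp_rw [derivProd_succ δ (hochschildFace y _), hochschildFace_zero_zero,
      tail_hochschildFace_zero, hochschildFace_succ_zero, tail_hochschildFace_succ, Fin.val_succ,
      pow_succ, mul_neg_one, neg_smul, ← mul_smul_comm, Finset.sum_neg_distrib, ← Finset.mul_sum,
      ih, hinit, derivProd_succ δ (Fin.tail y), hδ]
    simp only [Fin.tail, Fin.succ_last, Fin.val_zero, pow_zero, one_smul, Fin.succ_zero_eq_one]
    simp only [mul_sub, mul_smul_comm, add_mul, mul_assoc]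
    abel

section Commutator

variable {R : Type*} [Ring R]

theorem Ring.lie_mul (F x y : R) : ⁅F, x * y⁆ = ⁅F, x⁆ * y + x * ⁅F, y⁆ := by
  simp only [Ring.lie_def]
  noncomm_ring

theorem mul_lie_eq_neg_lie_mul_of_mul_self_eq_one {F : R} (hF : F * F = 1) (x : R) :
    F * ⁅F, x⁆ = -(⁅F, x⁆ * F) := by
  have hFFx : F * (F * x) = x := by rw [← mul_assoc, hF, one_mul]
  have hxFF : x * F * F = x := by rw [mul_assoc, hF, mul_one]
  rw [Ring.lie_def, mul_sub, sub_mul, hFFx, hxFF, neg_sub, mul_assoc]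

theorem mul_derivProd_lie {F : R} (hF : F * F = 1) {n : ℕ} (x : Fin n → R) :
    F * derivProd (⁅F, ·⁆) x = (-1 : ℤ) ^ n • (derivProd (⁅F, ·⁆) x * F) := by
  induction n with
  | zero => simp
  | succ n ih =>
    rw [derivProd_succ, ← mul_assoc, mul_lie_eq_neg_lie_mul_of_mul_self_eq_one hF, neg_mul,
      mul_assoc, ih, mul_smul_comm, pow_succ, mul_neg_one, neg_smul, mul_assoc]

theorem mul_lie_eq_neg_lie_mul_of_anticommute {γ F x : R} (hodd : F * γ + γ * F = 0)
    (hx : x * γ = γ * x) : γ * ⁅F, x⁆ = -(⁅F, x⁆ * γ) := by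
  have hγF : γ * F = -(F * γ) := eq_neg_of_add_eq_zero_right hodd
  calc γ * ⁅F, x⁆ = γ * F * x - γ * x * F := by rw [Ring.lie_def]; noncomm_ring
    _ = γ * F * x - x * (γ * F) := by rw [← hx, mul_assoc x]
    _ = -(F * (γ * x)) + x * (F * γ) := by rw [hγF]; noncomm_ring
    _ = -(⁅F, x⁆ * γ) := by rw [← hx, Ring.lie_def]; noncomm_ring

end Commutator

section Trace

variable {E : Type*} [NormedAddCommGroup E] [InnerProductSpace ℂ E]

theorem opTrace_add (S T : E →L[ℂ] E) : opTrace (S + T) = opTrace S + opTrace T :=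
  map_add (LinearMap.trace ℂ E) _ _

theorem opTrace_sub (S T : E →L[ℂ] E) : opTrace (S - T) = opTrace S - opTrace T :=
  map_sub (LinearMap.trace ℂ E) _ _

theorem opTrace_neg (T : E →L[ℂ] E) : opTrace (-T) = -opTrace T :=
  map_neg (LinearMap.trace ℂ E) _

theorem opTrace_zsmul (k : ℤ) (T : E →L[ℂ] E) : opTrace (k • T) = k * opTrace T := by
  rw [opTrace, ContinuousLinearMap.toLinearMap_smul, map_zsmul, zsmul_eq_mul]; rfl

theorem opTrace_sum {ι : Type*} (s : Finset ι) (T : ι → E →L[ℂ] E) :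
    opTrace (∑ i ∈ s, T i) = ∑ i ∈ s, opTrace (T i) := by
  rw [opTrace, ContinuousLinearMap.toLinearMap_sum, map_sum]; rfl

theorem opTrace_mul_comm (S T : E →L[ℂ] E) : opTrace (S * T) = opTrace (T * S) :=
  LinearMap.trace_mul_comm ℂ (S : E →ₗ[ℂ] E) T

theorem charCochainEven_eq (γ F : E →L[ℂ] E) {n : ℕ} (a : Fin (n + 1) → (E →L[ℂ] E)) :
    charCochainEven γ F a = opTrace (γ * a 0 * derivProd (⁅F, ·⁆) (Fin.tail a)) :=
  rfl

theorem charCochainEven_hochschild_cocycle (γ F : E →L[ℂ] E) {n : ℕ}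
    (a : Fin (n + 2) → (E →L[ℂ] E))
    (hlast : a (Fin.last (n + 1)) * γ = γ * a (Fin.last (n + 1))) :
    ∑ i : Fin (n + 1), (-1 : ℂ) ^ (i : ℕ) * charCochainEven γ F (hochschildFace a i) +
      (-1 : ℂ) ^ (n + 1) * charCochainEven γ F
        (fun j : Fin (n + 1) => if j = 0 then a (Fin.last (n + 1)) * a 0 else a j.castSucc) = 0 := by
  set P := derivProd (⁅F, ·⁆) (Fin.init (Fin.tail a)) * a (Fin.last (n + 1))
  have hfaces : ∑ i : Fin (n + 1), (-1 : ℂ) ^ (i : ℕ) * charCochainEven γ F (hochschildFace a i) =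
      (-1 : ℂ) ^ n * opTrace (γ * a 0 * P) := by
    have key := congrArg (fun X => opTrace (γ * a 0 * X))
      (sum_neg_one_pow_smul_derivProd_hochschildFace _ (Ring.lie_mul F) (Fin.tail a))
    simp only [Finset.mul_sum, mul_smul_comm, opTrace_sum, opTrace_zsmul, mul_sub, opTrace_sub]
      at key
    push_cast at key
    rw [Fin.sum_univ_succ]
    simp_rw [charCochainEven_eq, hochschildFace_zero_zero, tail_hochschildFace_zero,
      hochschildFace_succ_zero, tail_hochschildFace_succ, Fin.val_succ, pow_succ, mul_neg_one,
      neg_mul, Finset.sum_neg_distrib]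
    simp only [P, Fin.tail, Fin.succ_zero_eq_one, Fin.succ_last, Fin.val_zero, pow_zero, one_mul,
      mul_assoc] at key ⊢
    rw [key]
    ring
  have hwrap : charCochainEven γ F
      (fun j : Fin (n + 1) => if j = 0 then a (Fin.last (n + 1)) * a 0 else a j.castSucc) =
      opTrace (γ * a 0 * P) := by
    have hγ : γ * (a (Fin.last (n + 1)) * a 0) = a (Fin.last (n + 1)) * (γ * a 0) := by
      rw [← mul_assoc, ← hlast, mul_assoc]
    have htail : Fin.tail (fun j : Fin (n + 1) =>
        if j = 0 then a (Fin.last (n + 1)) * a 0 else a j.castSucc) = Fin.init (Fin.tail a) := by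
      funext j
      simp [Fin.tail, Fin.init, Fin.succ_ne_zero]
    rw [charCochainEven_eq, htail, if_pos rfl, hγ, mul_assoc, opTrace_mul_comm]
    simp only [P, mul_assoc]
  rw [hfaces, hwrap]
  ring

theorem opTrace_mul_lie_mul_eq_zero {γ F : E →L[ℂ] E} (hodd : F * γ + γ * F = 0)
    (c : E →L[ℂ] E) {ω : E →L[ℂ] E} (hω : F * ω = -(ω * F)) :
    opTrace (γ * ⁅F, c⁆ * ω) = 0 := by
  have hFγ : F * γ = -(γ * F) := eq_neg_of_add_eq_zero_left hodd
  have h : opTrace (γ * c * F * ω) = opTrace (γ * F * c * ω) :=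
    calc opTrace (γ * c * F * ω) = -opTrace (γ * c * ω * F) := by
          rw [mul_assoc _ F, hω, mul_neg, opTrace_neg, mul_assoc (γ * c)]
      _ = -opTrace (F * γ * c * ω) := by rw [opTrace_mul_comm, ← mul_assoc, ← mul_assoc]
      _ = opTrace (γ * F * c * ω) := by simp only [hFγ, neg_mul, opTrace_neg, neg_neg]
  rw [Ring.lie_def, mul_sub, sub_mul, opTrace_sub]
  simp only [← mul_assoc]
  rw [h, sub_self]

theorem charCochainEven_rotate {γ F : E →L[ℂ] E} (hF2 : F * F = 1) (hodd : F * γ + γ * F = 0)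
    {k : ℕ} (hk : Odd k) (a : Fin (k + 2) → (E →L[ℂ] E))
    (hlast : a (Fin.last (k + 1)) * γ = γ * a (Fin.last (k + 1))) :
    charCochainEven γ F (fun i => a (i - 1)) = charCochainEven γ F a := by
  set A := a (Fin.last (k + 1))
  set ω := derivProd (⁅F, ·⁆) (Fin.tail (Fin.init a))
  have hω : F * ω = -(ω * F) := by
    rw [mul_derivProd_lie hF2, hk.neg_one_pow, neg_one_zsmul]
  have hrot : Fin.tail (fun i => a (i - 1)) = Fin.init a := by
    funext j
    refine congrArg a ?_
    rw [Fin.ext_iff, Fin.coe_sub_one, if_neg (Fin.succ_ne_zero j)]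
    simp
  have hzero := opTrace_mul_lie_mul_eq_zero hodd (A * a 0) hω
  have hA : opTrace (γ * (⁅F, A⁆ * a 0) * ω) = -opTrace (γ * a 0 * (ω * ⁅F, A⁆)) := by
    rw [← mul_assoc, mul_lie_eq_neg_lie_mul_of_anticommute hodd hlast, neg_mul, neg_mul,
      opTrace_neg, mul_assoc, mul_assoc, opTrace_mul_comm]
    simp only [mul_assoc]
  rw [Ring.lie_mul, mul_add, add_mul, opTrace_add, hA] at hzero
  rw [charCochainEven_eq, charCochainEven_eq, hrot, derivProd_succ, derivProd_succ',
    ← Fin.tail_init_eq_init_tail, show (0 : Fin (k + 2)) - 1 = Fin.last _ by simp [Fin.ext_iff]]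
  simp only [Fin.init, Fin.tail, Fin.castSucc_zero, Fin.succ_last, mul_assoc] at hzero ⊢
  linear_combination hzero

end Trace

theorem connes_character_even_cyclic_cocycle_general (γ F : H →L[ℂ] H)
    (hF2 : F * F = 1) (hodd : F * γ + γ * F = 0)
    (n : ℕ) (hn : Even n) :
    (∀ a : Fin (n + 1) → (H →L[ℂ] H), (∀ i, a i * γ = γ * a i) →
      charCochainEven γ F (fun i => a (i - 1)) = (-1 : ℂ) ^ n * charCochainEven γ F a) ∧
    (∀ a : Fin (n + 2) → (H →L[ℂ] H), (∀ i, a i * γ = γ * a i) →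
      (∑ i : Fin (n + 1), (-1 : ℂ) ^ (i : ℕ) *
          charCochainEven γ F (fun j : Fin (n + 1) =>
            if (j : ℕ) < (i : ℕ) then a j.castSucc
            else if j = i then a i.castSucc * a i.succ
            else a j.succ))
        + (-1 : ℂ) ^ (n + 1) *
          charCochainEven γ F (fun j : Fin (n + 1) =>
            if j = 0 then a (Fin.last (n + 1)) * a 0 else a j.castSucc) = 0) := by
  refine ⟨fun a ha => ?_, fun a ha => charCochainEven_hochschild_cocycle γ F a (ha _)⟩
  rw [hn.neg_one_pow, one_mul]
  rcases n with _ | k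
  · exact congrArg (charCochainEven γ F) (funext fun i => congrArg a (Subsingleton.elim (α := Fin 1) _ _))
  · exact charCochainEven_rotate hF2 hodd (Nat.not_even_iff_odd.mp (Nat.even_add_one.mp hn)) a
      (ha _)

/-- **Connes' character of an even Fredholm module is a cyclic Hochschild
cocycle.**  Let `γ` be a self-adjoint grading (`γ² = 1`), `F` self-adjoint with
`F² = 1`, odd with respect to `γ` (`Fγ + γF = 0`), and let `n ≥ 2` be even.  For
operators commuting with `γ`, the cochain `τ(a₀,…,a_n) = Tr(γ a₀[F,a₁]⋯[F,a_n])`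
satisfies the cyclic symmetry `τ(a_n, a₀, …, a_{n−1}) = (−1)^n τ(a₀, …, a_n)` and
the Hochschild cocycle identity `bτ = 0`. -/
theorem connes_character_even_cyclic_cocycle (γ F : H →L[ℂ] H)
    (hγ : IsSelfAdjoint γ) (hγ2 : γ * γ = 1)
    (hF : IsSelfAdjoint F) (hF2 : F * F = 1) (hodd : F * γ + γ * F = 0)
    (n : ℕ) (hn : Even n) (hn2 : 2 ≤ n) :
    (∀ a : Fin (n + 1) → (H →L[ℂ] H), (∀ i, a i * γ = γ * a i) →
      charCochainEven γ F (fun i => a (i - 1)) = (-1 : ℂ) ^ n * charCochainEven γ F a) ∧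
    (∀ a : Fin (n + 2) → (H →L[ℂ] H), (∀ i, a i * γ = γ * a i) →
      (∑ i : Fin (n + 1), (-1 : ℂ) ^ (i : ℕ) *
          charCochainEven γ F (fun j : Fin (n + 1) =>
            if (j : ℕ) < (i : ℕ) then a j.castSucc
            else if j = i then a i.castSucc * a i.succ
            else a j.succ))
        + (-1 : ℂ) ^ (n + 1) *
          charCochainEven γ F (fun j : Fin (n + 1) =>
            if j = 0 then a (Fin.last (n + 1)) * a 0 else a j.castSucc) = 0) :=
  connes_character_even_cyclic_cocycle_general γ F hF2 hodd n hn
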